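/- arXiv:1312.5499 — 6 statements merged into one kernel-verified Lean document; each statement's English description precedes it below -/
import Mathlib

section
/- For each b ∈ ℂ, the vector space ℂ[h] carries an sl₂(ℂ)-module structure M_b in which h acts as multiplication by h, the element e = e_{1,2} acts by (e·f)(h) = (h+b)·f(h-1), and the element f = e_{2,1} acts by (f·g)(h) = -(h-b)·g(h+1). In particular the bracket relation [e,f]·g = 2h·g holds for all g ∈ ℂ[h]. -/
open Polynomial

namespace Polynomial

variable {R : Type*} [CommRing R]

theorem comp_X_sub_one_comp_X_add_one (p : R[X]) : (p.comp (X - 1)).comp (X + 1) = p := by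
  rw [comp_assoc, sub_comp, X_comp, one_comp, add_sub_cancel_right, comp_X]

theorem comp_X_add_one_comp_X_sub_one (p : R[X]) : (p.comp (X + 1)).comp (X - 1) = p := by
  rw [comp_assoc, add_comp, X_comp, one_comp, sub_add_cancel, comp_X]

noncomputable def sl2ShiftRaise (b : R) (f : R[X]) : R[X] := (X + C b) * f.comp (X - 1)

noncomputable def sl2ShiftLower (b : R) (g : R[X]) : R[X] := -(X - C b) * g.comp (X + 1)

theorem X_mul_sl2ShiftRaise_sub (b : R) (g : R[X]) :
    X * sl2ShiftRaise b g - sl2ShiftRaise b (X * g) = sl2ShiftRaise b g := by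
  simp only [sl2ShiftRaise, mul_comp, X_comp]
  ring

theorem X_mul_sl2ShiftLower_sub (b : R) (g : R[X]) :
    X * sl2ShiftLower b g - sl2ShiftLower b (X * g) = -sl2ShiftLower b g := by
  simp only [sl2ShiftLower, mul_comp, X_comp]
  ring

/-- The two shifts cancel, so `[e, f]` is multiplication by
`(X - b)(X + 1 + b) - (X + b)(X - 1 - b) = 2X`. -/
theorem sl2ShiftRaise_sl2ShiftLower_sub (b : R) (g : R[X]) :
    sl2ShiftRaise b (sl2ShiftLower b g) - sl2ShiftLower b (sl2ShiftRaise b g) = 2 * (X * g) := by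
  simp only [sl2ShiftRaise, sl2ShiftLower, mul_comp, neg_comp, add_comp, sub_comp, X_comp,
    C_comp, comp_X_add_one_comp_X_sub_one, comp_X_sub_one_comp_X_add_one]
  ring

end Polynomial

/-- For each `b ∈ ℂ`, the operators on `ℂ[h]` given by `h·f = hf`,
`e·f = (h+b)f(h-1)`, `f·g = -(h-b)g(h+1)` satisfy the `sl₂` bracket relations
`[h,e] = e`, `[h,f] = -f` and, in particular, `[e,f]·g = 2h·g`; i.e. they define
an `sl₂(ℂ)`-module structure `M_b` on `ℂ[h]`. -/
theorem Mb_is_sl2_module (b : ℂ) :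
    let E : ℂ[X] → ℂ[X] := fun f => (X + C b) * f.comp (X - 1)
    let F : ℂ[X] → ℂ[X] := fun g => -(X - C b) * g.comp (X + 1)
    let H : ℂ[X] → ℂ[X] := fun f => X * f
    (∀ g : ℂ[X], H (E g) - E (H g) = E g) ∧
    (∀ g : ℂ[X], H (F g) - F (H g) = -(F g)) ∧
    (∀ g : ℂ[X], E (F g) - F (E g) = 2 * (H g)) :=
  ⟨X_mul_sl2ShiftRaise_sub b, X_mul_sl2ShiftLower_sub b, sl2ShiftRaise_sl2ShiftLower_sub b⟩
end

section
/- The sl₂(ℂ)-module M'_b on ℂ[h] (with h acting by multiplication, e acting by f(h) ↦ f(h-1), and f acting by g(h) ↦ -(h+b+1)(h-b)g(h+1)) is a simple module for every b ∈ ℂ. -/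
open Polynomial

/-!
Stability under `h` makes `V` an ideal of `ℂ[h]`. Its generator `g` divides `g(h - 1)`, a polynomial
of the same degree and leading coefficient, so `g(h - 1) = g`. A polynomial with a period is constant
in characteristic zero, hence `g` is a unit and `V` is everything.
-/

namespace Polynomial

section Translation

variable {R : Type*} [CommRing R] [IsDomain R]

theorem comp_X_sub_C_eq_of_dvd {p : R[X]} {a : R} (h : p ∣ p.comp (X - C a)) :
    p.comp (X - C a) = p :=
  (eq_of_dvd_of_natDegree_le_of_leadingCoeff h
    (by rw [natDegree_comp, natDegree_X_sub_C, mul_one])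
    (by rw [leadingCoeff_comp (by simp), leadingCoeff_X_sub_C, one_pow, mul_one])).symm

theorem eq_C_eval_zero_of_comp_X_sub_C_eq [CharZero R] {p : R[X]} {a : R} (ha : a ≠ 0)
    (h : p.comp (X - C a) = p) : p = C (p.eval 0) := by
  have hperiod : ∀ n : ℕ, p.eval (n * a) = p.eval 0 := by
    intro n
    induction n with
    | zero => simp
    | succ n ih =>
      conv_lhs => rw [← h]
      simp [← ih, eval_comp, add_mul]
  refine eq_of_infinite_eval_eq p _ (Set.infinite_of_injective_forall_mem (f := fun n : ℕ => n * a)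
    (fun m n hmn => Nat.cast_injective (mul_right_cancel₀ ha hmn)) fun n => ?_)
  simp [hperiod n]

end Translation

section Field

variable {K : Type*} [Field K]

theorem mul_mem_of_forall_X_mul_mem {V : Submodule K K[X]} (hX : ∀ f ∈ V, X * f ∈ V) (p : K[X])
    {f : K[X]} (hf : f ∈ V) : p * f ∈ V := by
  induction p using Polynomial.induction_on with
  | C a => simpa [smul_eq_C_mul] using V.smul_mem a hf
  | add p q hp hq => simpa [add_mul] using V.add_mem hp hq
  | monomial n a ih => simpa [pow_succ, mul_assoc, mul_left_comm _ X] using hX _ ih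

def idealOfForallXMulMem (V : Submodule K K[X]) (hX : ∀ f ∈ V, X * f ∈ V) : Ideal K[X] where
  carrier := V
  add_mem' := V.add_mem
  zero_mem' := V.zero_mem
  smul_mem' p _ hf := mul_mem_of_forall_X_mul_mem hX p hf

@[simp]
theorem mem_idealOfForallXMulMem {V : Submodule K K[X]} {hX : ∀ f ∈ V, X * f ∈ V} {f : K[X]} :
    f ∈ idealOfForallXMulMem V hX ↔ f ∈ V :=
  Iff.rfl

theorem ideal_eq_top_of_forall_comp_X_sub_C_mem [CharZero K] {I : Ideal K[X]} {a : K}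
    (ha : a ≠ 0) (hI : ∀ f ∈ I, f.comp (X - C a) ∈ I) (hI₀ : I ≠ ⊥) : I = ⊤ := by
  set g := Submodule.IsPrincipal.generator I
  have hg : I = Ideal.span {g} := (Ideal.span_singleton_generator I).symm
  have hdvd : g ∣ g.comp (X - C a) := by
    rw [← Ideal.mem_span_singleton, ← hg]
    exact hI g (Submodule.IsPrincipal.generator_mem I)
  have hgC : g = C (g.eval 0) :=
    eq_C_eval_zero_of_comp_X_sub_C_eq ha (comp_X_sub_C_eq_of_dvd hdvd)
  have hg₀ : g.eval 0 ≠ 0 := fun h =>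
    hI₀ (by rw [hg, hgC, h, map_zero]; exact Ideal.span_singleton_eq_bot.2 rfl)
  rw [hg, Ideal.span_singleton_eq_top, hgC]
  exact isUnit_C.2 (Ne.isUnit hg₀)

end Field

end Polynomial

theorem Mb'_simple_general (V : Submodule ℂ ℂ[X])
    (hH : ∀ f ∈ V, X * f ∈ V)
    (hE : ∀ f ∈ V, f.comp (X - 1) ∈ V)
    (hV : V ≠ ⊥) : V = ⊤ := by
  have hI₀ : idealOfForallXMulMem V hH ≠ ⊥ := fun h =>
    hV (SetLike.ext fun f => by simpa using SetLike.ext_iff.1 h f)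
  have hI : idealOfForallXMulMem V hH = ⊤ :=
    ideal_eq_top_of_forall_comp_X_sub_C_mem one_ne_zero
      (fun f hf => by rw [map_one]; exact hE f hf) hI₀
  exact eq_top_iff.2 fun f _ => mem_idealOfForallXMulMem.1 (hI ▸ Submodule.mem_top)

/-- The `sl₂(ℂ)`-module `M'_b` on `ℂ[h]` (with `h` acting by multiplication,
`e` by `f(h) ↦ f(h-1)` and `f` by `g(h) ↦ -(h+b+1)(h-b)g(h+1)`) is simple for
every `b ∈ ℂ`: any nonzero subspace invariant under the three actions is everything. -/
theorem Mb'_simple (b : ℂ) (V : Submodule ℂ ℂ[X])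
    (hH : ∀ f ∈ V, X * f ∈ V)
    (hE : ∀ f ∈ V, f.comp (X - 1) ∈ V)
    (hF : ∀ f ∈ V, -((X + C b + 1) * (X - C b)) * f.comp (X + 1) ∈ V)
    (hV : V ≠ ⊥) : V = ⊤ :=
  Mb'_simple_general V hH hE hV
end

section
/- If 2b is a nonnegative integer, then the subspace S := ℂ[h]·Q, where Q = ∏_{j=0}^{2b}(h + b - j), is an sl₂(ℂ)-submodule of M_b, and the map f ↦ f·Q is an isomorphism of sl₂-modules from M_{-b-1} onto S. -/
/-!
`Q` is the descending Pochhammer polynomial `D (2b + 1)`, where `D n = X (X - 1) ⋯ (X - n + 1)`,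
evaluated at `h + b`. The two factorisations `D (n + 1) = X · D n (X - 1) = D n · (X - n)` give
`(h + b) Q(h - 1) = (h + b - 2b - 1) Q(h) = (h - b - 1) Q(h)` and
`(h - b) Q(h + 1) = (h + b + 1) Q(h)`, which are exactly the relations saying that multiplication by `Q` carries the actions of `e` and `f`
on `M_{-b-1}` to those on `M_b`. Injectivity holds because `Q` is monic.
-/

open Polynomial

namespace Polynomial

variable {R : Type*} [CommRing R]

theorem descPochhammer_eq_prod_range (n : ℕ) :
    descPochhammer R n = ∏ j ∈ Finset.range n, (X - C (j : R)) := by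
  induction n with
  | zero => simp
  | succ n ih => rw [descPochhammer_succ_right, ih, Finset.prod_range_succ, map_natCast]

theorem descPochhammer_comp_X_add_C_eq_prod_range (a : R) (n : ℕ) :
    (descPochhammer R n).comp (X + C a) = ∏ j ∈ Finset.range n, (X + C a - C (j : R)) := by
  simp [descPochhammer_eq_prod_range, prod_comp]

theorem mul_descPochhammer_comp_X_add_C_comp_X_sub_one (a : R) (n : ℕ) :
    (X + C a) * ((descPochhammer R n).comp (X + C a)).comp (X - 1) =
      (X + C a - (n : R[X])) * (descPochhammer R n).comp (X + C a) := by
  have h := congrArg (·.comp (X + C a))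
    ((descPochhammer_succ_left R n).symm.trans (descPochhammer_succ_right R n))
  simp only [mul_comp, X_comp, sub_comp, natCast_comp, comp_assoc, one_comp] at h
  have hshift : (X + C a).comp (X - 1) = X + C a - 1 := by
    simp only [add_comp, X_comp, C_comp]; ring
  rw [comp_assoc, hshift, h, mul_comm]

theorem mul_descPochhammer_comp_X_add_C_comp_X_add_one (a : R) (n : ℕ) :
    (X + C a + 1 - (n : R[X])) * ((descPochhammer R n).comp (X + C a)).comp (X + 1) =
      (X + C a + 1) * (descPochhammer R n).comp (X + C a) := by
  have h := congrArg (·.comp (X + C a + 1))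
    ((descPochhammer_succ_right R n).symm.trans (descPochhammer_succ_left R n))
  simp only [mul_comp, X_comp, sub_comp, natCast_comp, comp_assoc, one_comp,
    add_sub_cancel_right] at h
  have hshift : (X + C a).comp (X + 1) = X + C a + 1 := by
    simp only [add_comp, X_comp, C_comp]; ring
  rw [comp_assoc, hshift, mul_comm, h]

end Polynomial

/-- If `2b ∈ ℕ₀`, then `S := ℂ[h]·Q` with `Q = ∏_{j=0}^{2b}(h+b-j)` is an
`sl₂(ℂ)`-submodule of `M_b`, and `f ↦ f·Q` is an isomorphism of `sl₂`-modules
from `M_{-b-1}` onto `S`: it is injective, surjective onto `S` by definition, and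
intertwines the actions of `h`, `e` and `f`. -/
theorem Mb_submodule_iso (b : ℂ) (m : ℕ) (hb : 2 * b = (m : ℂ)) :
    let Q : ℂ[X] := ∏ j ∈ Finset.range (m + 1), (X + C b - C (j : ℂ))
    Function.Injective (fun f : ℂ[X] => f * Q) ∧
    (∀ f : ℂ[X], X * (f * Q) = (X * f) * Q) ∧
    (∀ f : ℂ[X],
      (X + C b) * ((f * Q).comp (X - 1)) = ((X + C (-b - 1)) * f.comp (X - 1)) * Q) ∧
    (∀ f : ℂ[X],
      -(X - C b) * ((f * Q).comp (X + 1)) = (-(X - C (-b - 1)) * f.comp (X + 1)) * Q) := by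
  intro Q
  have hQ : (descPochhammer ℂ (m + 1)).comp (X + C b) = Q :=
    descPochhammer_comp_X_add_C_eq_prod_range b (m + 1)
  have hQ0 : Q ≠ 0 := hQ ▸ ((monic_descPochhammer ℂ (m + 1)).comp_X_add_C b).ne_zero
  have hdown : (X + C b) * Q.comp (X - 1) = (X + C (-b - 1)) * Q := by
    have hc : -b - 1 = b - ((m + 1 : ℕ) : ℂ) := by push_cast; linear_combination -hb
    rw [← hQ, mul_descPochhammer_comp_X_add_C_comp_X_sub_one, hc, C_sub, map_natCast]
    ring
  have hup : (X - C b) * Q.comp (X + 1) = (X + C b + 1) * Q := by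
    have hc : -b = b + 1 - ((m + 1 : ℕ) : ℂ) := by push_cast; linear_combination -hb
    rw [← hQ, ← mul_descPochhammer_comp_X_add_C_comp_X_add_one, sub_eq_add_neg X, ← C_neg, hc,
      C_sub, C_add, C_1, map_natCast]
    ring
  refine ⟨mul_left_injective₀ hQ0, fun f => by ring, fun f => ?_, fun f => ?_⟩
  · rw [mul_comp]
    linear_combination f.comp (X - 1) * hdown
  · rw [mul_comp, map_sub, map_neg, map_one]
    linear_combination -f.comp (X + 1) * hup
end

section
/- Let L(1) = ℂ² be the natural 2-dimensional sl₂-module. For b ∈ ℂ with 2b ≠ -1, the tensor product M'_b ⊗ L(1) decomposes as a direct sum of sl₂-modules isomorphic to M'_{b-1/2} ⊕ M'_{b+1/2}; explicitly, the maps f(h) ↦ ((h-b)f(h+1/2), f(h-1/2)) and f(h) ↦ ((h+b+1)f(h+1/2), f(h-1/2)) are injective sl₂-module homomorphisms from M'_{b-1/2} and M'_{b+1/2} respectively into M'_b ⊗ L(1), and their images are complementary submodules. -/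
/-!
Shifting the argument by `±1/2` turns `h` into `h ± 1/2`, the weights of `e₁` and `e₂`.
An embedding `f ↦ (u(h) f(h + 1/2), f(h - 1/2))` then commutes with `e` exactly when
`u(h) - u(h - 1) = 1`, and commutation with `f` is a polynomial identity in each case.
The two embeddings share the second component and their first factors `h - b`, `h + b + 1` differ
by the constant `2b + 1`; when it is nonzero one solves for the preimages of any pair, and a
common element of both images must vanish.
-/

open Polynomial

theorem Polynomial.comp_X_sub_C_injective {R : Type*} [CommRing R] (c : R) :
    Function.Injective fun f : R[X] => f.comp (X - C c) := by
  intro f g hfg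
  apply taylor_injective (-c)
  simpa only [taylor_apply, C_neg, ← sub_eq_add_neg] using hfg

namespace Mb'TensorL1

noncomputable section

def tensorH (p : ℂ[X] × ℂ[X]) : ℂ[X] × ℂ[X] :=
  ((X + C 2⁻¹) * p.1, (X - C 2⁻¹) * p.2)

def tensorE (p : ℂ[X] × ℂ[X]) : ℂ[X] × ℂ[X] :=
  (p.1.comp (X - 1) + p.2, p.2.comp (X - 1))

def tensorF (b : ℂ) (p : ℂ[X] × ℂ[X]) : ℂ[X] × ℂ[X] :=
  (-((X + C b + 1) * (X - C b)) * p.1.comp (X + 1),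
   -((X + C b + 1) * (X - C b)) * p.2.comp (X + 1) + p.1)

/-- The action of `f` on `M'_c`. -/
def fAction (c : ℂ) (g : ℂ[X]) : ℂ[X] :=
  -((X + C c + 1) * (X - C c)) * g.comp (X + 1)

/-- The two embeddings of the theorem are `u = h - b` and `u = h + b + 1`. -/
def embed (u f : ℂ[X]) : ℂ[X] × ℂ[X] :=
  (u * f.comp (X + C 2⁻¹), f.comp (X - C 2⁻¹))

variable {u v : ℂ[X]}

theorem embed_injective (u : ℂ[X]) : Function.Injective (embed u) :=
  fun _ _ h => comp_X_sub_C_injective 2⁻¹ (congrArg Prod.snd h)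

theorem embed_X_mul (u f : ℂ[X]) : embed u (X * f) = tensorH (embed u f) := by
  simp only [embed, tensorH, mul_comp, X_comp]
  ext1 <;> ring

theorem embed_comp_X_sub_one (hu : u.comp (X - 1) + 1 = u) (f : ℂ[X]) :
    embed u (f.comp (X - 1)) = tensorE (embed u f) := by
  ext1 <;> apply Polynomial.funext <;> intro x
  · have hux : eval (x - 1) u + 1 = eval x u := by simpa [eval_comp] using congrArg (eval x) hu
    simp only [embed, tensorE, eval_add, eval_mul, eval_comp, eval_sub, eval_X, eval_C, eval_one]
    rw [← hux, show x + 2⁻¹ - 1 = x - 2⁻¹ by ring, show x - 1 + 2⁻¹ = x - 2⁻¹ by ring]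
    ring
  · simp only [embed, tensorE, eval_comp, eval_sub, eval_X, eval_C, eval_one]
    ring_nf

theorem embed_fAction_sub_half (b : ℂ) (f : ℂ[X]) :
    embed (X - C b) (fAction (b - 2⁻¹) f) = tensorF b (embed (X - C b) f) := by
  ext1 <;> apply Polynomial.funext <;> intro x <;>
    simp only [embed, tensorF, fAction, eval_add, eval_mul, eval_neg, eval_comp, eval_sub, eval_X,
      eval_C, eval_one] <;> ring_nf

theorem embed_fAction_add_half (b : ℂ) (f : ℂ[X]) :
    embed (X + C b + 1) (fAction (b + 2⁻¹) f) = tensorF b (embed (X + C b + 1) f) := by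
  ext1 <;> apply Polynomial.funext <;> intro x <;>
    simp only [embed, tensorF, fAction, eval_add, eval_mul, eval_neg, eval_comp, eval_sub, eval_X,
      eval_C, eval_one] <;> ring_nf

theorem eq_zero_of_embed_eq_embed (huv : u ≠ v) {f g : ℂ[X]} (h : embed u f = embed v g) : f = 0 ∧ g = 0 := by
  obtain rfl : f = g := comp_X_sub_C_injective 2⁻¹ (congrArg Prod.snd h)
  have hshift : f.comp (X + C 2⁻¹) = 0 := by
    by_contra hne
    exact huv (mul_right_cancel₀ hne (congrArg Prod.fst h))
  have hf : f = 0 := taylor_injective 2⁻¹ (by rw [taylor_apply, hshift, map_zero])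
  exact ⟨hf, hf⟩

theorem exists_embed_add_embed {d : ℂ} (hd : d ≠ 0) (hv : v = u + C d) (p : ℂ[X] × ℂ[X]) :
    ∃ f g : ℂ[X], p = embed u f + embed v g := by
  -- The second components force `f + g = p.2(h + 1/2)`; the first then determines `d • g(h + 1/2)`.
  set g := (C d⁻¹ * (p.1 - u * p.2.comp (X + 1))).comp (X - C 2⁻¹)
  refine ⟨p.2.comp (X + C 2⁻¹) - g, g, ?_⟩
  subst hv
  ext1 <;> apply Polynomial.funext <;> intro x <;>
    simp only [g, embed, Prod.mk_add_mk, eval_add, eval_mul, eval_sub, eval_comp, eval_X, eval_C,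
      eval_one]
  · field_simp
    ring_nf
  · ring_nf

end

end Mb'TensorL1

open Mb'TensorL1

/-- For `2b ≠ -1`, the tensor product `M'_b ⊗ L(1)` (realized on pairs
`(f,g) = f⊗e₁ + g⊗e₂` of polynomials with the explicit action below) decomposes
as `M'_{b-1/2} ⊕ M'_{b+1/2}`: the maps
`Φ₁ : f(h) ↦ ((h-b)f(h+1/2), f(h-1/2))` and `Φ₂ : f(h) ↦ ((h+b+1)f(h+1/2), f(h-1/2))`
are injective `sl₂`-module homomorphisms from `M'_{b-1/2}` resp. `M'_{b+1/2}` into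
`M'_b ⊗ L(1)`, and their images are complementary submodules. -/
theorem Mb'_tensor_L1_decomposition (b : ℂ) (hb : 2 * b ≠ -1) :
    -- action of sl₂ on M'_b ⊗ L(1), on pairs (f,g)
    let Ht : ℂ[X] × ℂ[X] → ℂ[X] × ℂ[X] := fun p =>
      ((X + C 2⁻¹) * p.1, (X - C 2⁻¹) * p.2)
    let Et : ℂ[X] × ℂ[X] → ℂ[X] × ℂ[X] := fun p =>
      (p.1.comp (X - 1) + p.2, p.2.comp (X - 1))
    let Ft : ℂ[X] × ℂ[X] → ℂ[X] × ℂ[X] := fun p =>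
      (-((X + C b + 1) * (X - C b)) * p.1.comp (X + 1),
       -((X + C b + 1) * (X - C b)) * p.2.comp (X + 1) + p.1)
    -- the f-action in M'_c
    let F' : ℂ → ℂ[X] → ℂ[X] := fun c g => -((X + C c + 1) * (X - C c)) * g.comp (X + 1)
    let Φ₁ : ℂ[X] → ℂ[X] × ℂ[X] := fun f =>
      ((X - C b) * f.comp (X + C 2⁻¹), f.comp (X - C 2⁻¹))
    let Φ₂ : ℂ[X] → ℂ[X] × ℂ[X] := fun f =>
      ((X + C b + 1) * f.comp (X + C 2⁻¹), f.comp (X - C 2⁻¹))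
    Function.Injective Φ₁ ∧ Function.Injective Φ₂ ∧
    -- Φ₁ is a module homomorphism from M'_{b - 1/2}
    (∀ f : ℂ[X], Φ₁ (X * f) = Ht (Φ₁ f)) ∧
    (∀ f : ℂ[X], Φ₁ (f.comp (X - 1)) = Et (Φ₁ f)) ∧
    (∀ f : ℂ[X], Φ₁ (F' (b - 2⁻¹) f) = Ft (Φ₁ f)) ∧
    -- Φ₂ is a module homomorphism from M'_{b + 1/2}
    (∀ f : ℂ[X], Φ₂ (X * f) = Ht (Φ₂ f)) ∧
    (∀ f : ℂ[X], Φ₂ (f.comp (X - 1)) = Et (Φ₂ f)) ∧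
    (∀ f : ℂ[X], Φ₂ (F' (b + 2⁻¹) f) = Ft (Φ₂ f)) ∧
    -- the images are complementary
    (∀ p : ℂ[X] × ℂ[X], ∃ f g : ℂ[X], p = Φ₁ f + Φ₂ g) ∧
    (∀ f g : ℂ[X], Φ₁ f = Φ₂ g → f = 0 ∧ g = 0) := by
  intro Ht Et Ft F' Φ₁ Φ₂
  have hgap : X + C b + 1 = X - C b + C (2 * b + 1) := by
    simp only [map_add, map_mul, map_one, map_ofNat]
    ring
  have hgap_ne : (2 * b + 1 : ℂ) ≠ 0 := fun h => hb (by linear_combination h)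
  have hΦ₁_shift : (X - C b).comp (X - 1) + 1 = X - C b := by
    simp only [sub_comp, X_comp, C_comp]
    ring
  have hΦ₂_shift : (X + C b + 1).comp (X - 1) + 1 = X + C b + 1 := by
    simp only [add_comp, X_comp, C_comp, one_comp]
    ring
  have hΦ_ne : X - C b ≠ X + C b + 1 := by
    rw [hgap, ne_eq, left_eq_add, C_eq_zero]
    exact hgap_ne
  exact ⟨embed_injective _, embed_injective _, embed_X_mul _, embed_comp_X_sub_one hΦ₁_shift,
    embed_fAction_sub_half b, embed_X_mul _, embed_comp_X_sub_one hΦ₂_shift,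
    embed_fAction_add_half b, exists_embed_add_embed hgap_ne hgap, fun _ _ => eq_zero_of_embed_eq_embed hΦ_ne⟩
end

section
/- If p, q ∈ ℂ[h] satisfy q·σ⁻¹(p) = -(h+b+1)(h-b) for some b ∈ ℂ (where σ⁻¹(p)(h) = p(h+1)), then the pair (deg p, deg q) belongs to {(2,0),(0,2),(1,1)}, and up to a nonzero scalar a ∈ ℂ*, (p,q) is one of: (a, -a⁻¹(h+b+1)(h-b)), (a(h+b)(h-b-1), -a⁻¹), (a(h+b), -a⁻¹(h-b)), or (a(h-b-1), -a⁻¹(h+b+1)). -/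
/-!
Put `P = σ⁻¹(p)`. Since `-q · P = (h+b+1)(h-b)` is a product of two irreducibles in the UFD
`ℂ[h]`, `P` is a unit (a nonzero constant) times one of `1`, `h+b+1`, `h-b` or their product, and
`-q` is the inverse constant times the complementary factor. Shifting back by `h ↦ h-1` turns
`h+b+1` into `h+b` and `h-b` into `h-b-1`.
-/

open Polynomial

section Field

variable {K : Type*} [Field K]

theorem Polynomial.eq_C_or_eq_C_mul_of_mul_eq_irreducible {l d f : K[X]} (hl : Irreducible l)
    (h : d * f = l) :
    ∃ u : K, u ≠ 0 ∧ ((d = C u ∧ f = C u⁻¹ * l) ∨ (d = C u * l ∧ f = C u⁻¹)) := by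
  rcases hl.isUnit_or_isUnit h.symm with hunit | hunit <;>
    obtain ⟨u, hu, rfl⟩ := isUnit_iff.mp hunit
  · refine ⟨u, hu.ne_zero, .inl ⟨rfl, ?_⟩⟩
    rw [← h, ← mul_assoc, ← C_mul, inv_mul_cancel₀ hu.ne_zero, C_1, one_mul]
  · refine ⟨u⁻¹, inv_ne_zero hu.ne_zero, .inr ⟨?_, by rw [inv_inv]⟩⟩
    rw [← h, mul_comm d, ← mul_assoc, ← C_mul, inv_mul_cancel₀ hu.ne_zero, C_1, one_mul]

theorem Polynomial.eq_C_mul_of_mul_eq_irreducible_mul_irreducible {l₁ l₂ P Q : K[X]}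
    (h₁ : Irreducible l₁) (h₂ : Irreducible l₂) (h : Q * P = l₁ * l₂) :
    ∃ c : K, c ≠ 0 ∧
      ((P = C c ∧ Q = C c⁻¹ * (l₁ * l₂)) ∨ (P = C c * (l₁ * l₂) ∧ Q = C c⁻¹) ∨
       (P = C c * l₁ ∧ Q = C c⁻¹ * l₂) ∨ (P = C c * l₂ ∧ Q = C c⁻¹ * l₁)) := by
  obtain ⟨d₁, d₂, ⟨f₁, hl₁⟩, ⟨f₂, hl₂⟩, rfl⟩ := dvd_mul.mp (Dvd.intro_left Q h)
  have hP : d₁ * d₂ ≠ 0 := by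
    rintro h0
    rw [h0, mul_zero] at h
    exact mul_ne_zero h₁.ne_zero h₂.ne_zero h.symm
  obtain rfl : Q = f₁ * f₂ := mul_right_cancel₀ hP (by rw [h, hl₁, hl₂]; ring)
  obtain ⟨u₁, hu₁, ⟨rfl, rfl⟩ | ⟨rfl, rfl⟩⟩ :=
    eq_C_or_eq_C_mul_of_mul_eq_irreducible h₁ hl₁.symm <;>
  obtain ⟨u₂, hu₂, ⟨rfl, rfl⟩ | ⟨rfl, rfl⟩⟩ :=
    eq_C_or_eq_C_mul_of_mul_eq_irreducible h₂ hl₂.symm <;>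
  refine ⟨u₁ * u₂, mul_ne_zero hu₁ hu₂, ?_⟩
  · exact .inl ⟨by rw [map_mul], by rw [mul_inv, map_mul]; ring⟩
  · exact .inr <| .inr <| .inr ⟨by rw [map_mul]; ring, by rw [mul_inv, map_mul]; ring⟩
  · exact .inr <| .inr <| .inl ⟨by rw [map_mul]; ring, by rw [mul_inv, map_mul]; ring⟩
  · exact .inr <| .inl ⟨by rw [map_mul]; ring, by rw [mul_inv, map_mul]⟩

end Field

/-- If `p, q ∈ ℂ[h]` satisfy `q·σ⁻¹(p) = -(h+b+1)(h-b)`, then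
`(deg p, deg q) ∈ {(2,0),(0,2),(1,1)}` and, up to a nonzero scalar `a`,
`(p,q)` is one of `(a, -a⁻¹(h+b+1)(h-b))`, `(a(h+b)(h-b-1), -a⁻¹)`,
`(a(h+b), -a⁻¹(h-b))`, `(a(h-b-1), -a⁻¹(h+b+1))`. -/
theorem pq_factorization (b : ℂ) (p q : ℂ[X])
    (h : q * p.comp (X + 1) = -((X + C b + 1) * (X - C b))) :
    ((p.natDegree, q.natDegree) = (2, 0) ∨ (p.natDegree, q.natDegree) = (0, 2) ∨
      (p.natDegree, q.natDegree) = (1, 1)) ∧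
    ∃ a : ℂ, a ≠ 0 ∧
      ((p = C a ∧ q = -(C a⁻¹ * ((X + C b + 1) * (X - C b)))) ∨
       (p = C a * ((X + C b) * (X - C b - 1)) ∧ q = -(C a⁻¹)) ∨
       (p = C a * (X + C b) ∧ q = -(C a⁻¹ * (X - C b))) ∨
       (p = C a * (X - C b - 1) ∧ q = -(C a⁻¹ * (X + C b + 1)))) := by
  have hirr₁ : Irreducible (X + C b + 1 : ℂ[X]) :=
    irreducible_of_degree_eq_one (by compute_degree!)
  have hl₁ : (X + C b + 1 : ℂ[X]).natDegree = 1 := by compute_degree!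
  obtain ⟨a, ha, hpq⟩ := eq_C_mul_of_mul_eq_irreducible_mul_irreducible hirr₁
    (irreducible_X_sub_C b) (by rw [neg_mul, h, neg_neg])
  have hp : p = (p.comp (X + 1)).comp (X - 1) := by simp [comp_assoc]
  have hq : q = -(-q) := (neg_neg q).symm
  have hdeg : p.natDegree = (p.comp (X + 1)).natDegree ∧ q.natDegree = (-q).natDegree :=
    ⟨by rw [natDegree_comp, ← C_1, natDegree_X_add_C, mul_one], (natDegree_neg q).symm⟩
  rcases hpq with ⟨hP, hQ⟩ | ⟨hP, hQ⟩ | ⟨hP, hQ⟩ | ⟨hP, hQ⟩ <;>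
    rw [hP] at hp hdeg <;> rw [hQ] at hq hdeg <;>
    simp only [mul_comp, C_comp, add_comp, sub_comp, X_comp, one_comp] at hp <;>
    simp only [natDegree_C_mul ha, natDegree_C_mul (inv_ne_zero ha), natDegree_C,
      natDegree_mul hirr₁.ne_zero (X_sub_C_ne_zero b), hl₁,
      natDegree_X_sub_C] at hdeg <;>
    refine ⟨by simp [hdeg], a, ha, ?_⟩
  · exact .inl ⟨hp, hq⟩
  · exact .inr <| .inl ⟨by rw [hp]; ring, hq⟩
  · exact .inr <| .inr <| .inl ⟨by rw [hp]; ring, hq⟩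
  · exact .inr <| .inr <| .inr ⟨by rw [hp]; ring, hq⟩
end

section
/- For n > 1, the sl_{n+1}-modules M_b^S and M_{b'}^{S'} (defined on P = ℂ[h₁,...,hₙ] as in Definition of M_b^S) are isomorphic if and only if b = b' and S = S'. More precisely: any sl_{n+1}-module isomorphism φ : M_b^S → M_{b'}^{S'} that is also a map of ℂ[h₁,...,hₙ]-modules is multiplication by a nonzero constant, and its existence forces the polynomials p_i := e_{i,n+1}·1 to agree in both modules for every i, which forces b = b' and S = S'. -/
/-!
An isomorphism commuting with multiplication by `ℂ[h₁,…,hₙ]` is multiplication by `φ 1`, which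
must be a unit, i.e. a nonzero constant. Comparing `e_{i,n+1} · 1` in both modules then gives the
polynomial identity `(h̄ + b) pᵢ = (h̄ + b') pᵢ'`, where `pᵢ` is `1` or `hᵢ - b - 1` according to
whether `i ∈ S`. For `n > 1` the linear forms `h̄` and `hᵢ` are independent, so both sides may be
evaluated at arbitrary values of `(h̄, hᵢ)`, which separates `b` and the membership of `i`.
-/

open MvPolynomial

/-- The shift `σ_i : h_i ↦ h_i - 1` on `ℂ[h₁,…,hₙ]`. -/
noncomputable def shiftDown (n : ℕ) (i : Fin n) :
    MvPolynomial (Fin n) ℂ →ₐ[ℂ] MvPolynomial (Fin n) ℂ :=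
  aeval fun k : Fin n => X k - if k = i then 1 else 0

/-- The inverse shift `σ_i⁻¹ : h_i ↦ h_i + 1` on `ℂ[h₁,…,hₙ]`. -/
noncomputable def shiftUp (n : ℕ) (i : Fin n) :
    MvPolynomial (Fin n) ℂ →ₐ[ℂ] MvPolynomial (Fin n) ℂ :=
  aeval fun k : Fin n => X k + if k = i then 1 else 0

/-- `h̄ = h₁ + ⋯ + hₙ`. -/
noncomputable def hbar (n : ℕ) : MvPolynomial (Fin n) ℂ := ∑ t : Fin n, X t

/-- The action of `e_{i,n+1}` on `M_b^S`. -/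
noncomputable def Eop (n : ℕ) (b : ℂ) (S : Finset (Fin n)) (i : Fin n)
    (f : MvPolynomial (Fin n) ℂ) : MvPolynomial (Fin n) ℂ :=
  (hbar n + C b) * (if i ∈ S then 1 else X i - C b - 1) * shiftDown n i f

/-- The action of `e_{n+1,j}` on `M_b^S`. -/
noncomputable def Fop (n : ℕ) (b : ℂ) (S : Finset (Fin n)) (j : Fin n)
    (f : MvPolynomial (Fin n) ℂ) : MvPolynomial (Fin n) ℂ :=
  -(if j ∈ S then X j - C b else 1) * shiftUp n j f

/-- The action of `e_{i,j}` (`i ≠ j ≤ n`) on `M_b^S`. -/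
noncomputable def EijOp (n : ℕ) (b : ℂ) (S : Finset (Fin n)) (i j : Fin n)
    (f : MvPolynomial (Fin n) ℂ) : MvPolynomial (Fin n) ℂ :=
  (if i ∈ S then 1 else X i - C b - 1) * (if j ∈ S then X j - C b else 1) *
    shiftDown n i (shiftUp n j f)

theorem isUnit_apply_one_of_map_mul {A : Type*} [CommMonoid A] (φ : A → A)
    (hmul : ∀ f g, φ (f * g) = f * φ g) (hφ : Function.Surjective φ) : IsUnit (φ 1) := by
  obtain ⟨g, hg⟩ := hφ 1
  refine IsUnit.of_mul_eq_one g ?_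
  rw [mul_comm, ← hmul, mul_one, hg]

theorem MvPolynomial.exists_isUnit_forall_eq_smul_of_map_mul {R σ : Type*} [CommRing R]
    [IsReduced R] (φ : MvPolynomial σ R ≃ₗ[R] MvPolynomial σ R)
    (hmul : ∀ f g, φ (f * g) = f * φ g) : ∃ c : R, IsUnit c ∧ ∀ f, φ f = c • f := by
  obtain ⟨c, hc, hφ1⟩ :=
    isUnit_iff_eq_C_of_isReduced.mp (isUnit_apply_one_of_map_mul φ hmul φ.surjective)
  refine ⟨c, hc, fun f => ?_⟩
  rw [smul_eq_C_mul, ← hφ1, mul_comm, ← hmul, mul_one]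

theorem exists_sum_eq_and_apply_eq {ι M : Type*} [Fintype ι] [DecidableEq ι] [AddCommGroup M]
    {i j : ι} (hji : j ≠ i) (s t : M) : ∃ x : ι → M, ∑ k, x k = s ∧ x i = t :=
  ⟨Pi.single i t + Pi.single j (s - t), by simp [Finset.sum_add_distrib], by simp [hji]⟩

theorem Eop_smul (n : ℕ) (b : ℂ) (S : Finset (Fin n)) (i : Fin n) (c : ℂ)
    (f : MvPolynomial (Fin n) ℂ) : Eop n b S i (c • f) = c • Eop n b S i f := by
  simp only [Eop, map_smul, mul_smul_comm]

theorem eval_Eop_one (n : ℕ) (b : ℂ) (S : Finset (Fin n)) (i : Fin n) (x : Fin n → ℂ) :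
    eval x (Eop n b S i 1) = (∑ k, x k + b) * (if i ∈ S then 1 else x i - b - 1) := by
  simp [Eop, hbar, apply_ite (eval x)]

theorem eq_and_iff_of_forall_mul_ite_eq {b b' : ℂ} {P P' : Prop} [Decidable P] [Decidable P']
    (h : ∀ s t : ℂ, (s + b) * (if P then 1 else t - b - 1) =
      (s + b') * (if P' then 1 else t - b' - 1)) : b = b' ∧ (P ↔ P') := by
  by_cases hP : P <;> by_cases hP' : P' <;> simp only [hP, hP', if_true, if_false] at h
  · exact ⟨by simpa using h 0 0, iff_of_true hP hP'⟩
  · have h0 := h 0 (b' + 1)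
    have h1 := h 1 (b' + 1)
    exact absurd (by linear_combination h1 - h0) (one_ne_zero (α := ℂ))
  · have h0 := h 0 (b + 1)
    have h1 := h 1 (b + 1)
    exact absurd (by linear_combination h0 - h1) (one_ne_zero (α := ℂ))
  · exact ⟨by linear_combination h 0 0 - h 1 0, iff_of_false hP hP'⟩

theorem eq_and_mem_iff_of_Eop_one_eq {n : ℕ} (hn : 1 < n) {b b' : ℂ} {S S' : Finset (Fin n)}
    {i : Fin n} (h : Eop n b S i 1 = Eop n b' S' i 1) : b = b' ∧ (i ∈ S ↔ i ∈ S') := by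
  have : Nontrivial (Fin n) := Fin.nontrivial_iff_two_le.mpr hn
  obtain ⟨j, hji⟩ := exists_ne i
  refine eq_and_iff_of_forall_mul_ite_eq fun s t => ?_
  obtain ⟨x, hxs, hxi⟩ := exists_sum_eq_and_apply_eq hji s t
  simpa only [eval_Eop_one, hxs, hxi] using congrArg (eval x) h

theorem MbS_iso_classification_general (n : ℕ) (hn : 1 < n) (b b' : ℂ) (S S' : Finset (Fin n))
    (φ : MvPolynomial (Fin n) ℂ ≃ₗ[ℂ] MvPolynomial (Fin n) ℂ)
    (hmul : ∀ f g : MvPolynomial (Fin n) ℂ, φ (f * g) = f * φ g)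
    (hE : ∀ (i : Fin n) (f), φ (Eop n b S i f) = Eop n b' S' i (φ f)) :
    (∃ c : ℂ, c ≠ 0 ∧ ∀ f, φ f = c • f) ∧ b = b' ∧ S = S' := by
  obtain ⟨c, hc, hφ⟩ := exists_isUnit_forall_eq_smul_of_map_mul φ hmul
  have hp : ∀ i, Eop n b S i 1 = Eop n b' S' i 1 := fun i => by
    have h := hE i 1
    rw [hφ, hφ, Eop_smul] at h
    exact smul_right_injective _ hc.ne_zero h
  exact ⟨⟨c, hc.ne_zero, hφ⟩, (eq_and_mem_iff_of_Eop_one_eq hn (hp ⟨0, by omega⟩)).1,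
    Finset.ext fun i => (eq_and_mem_iff_of_Eop_one_eq hn (hp i)).2⟩

/-- For `n > 1`, any isomorphism of `sl_{n+1}`-modules `φ : M_b^S → M_{b'}^{S'}` which
is also a map of `ℂ[h₁,…,hₙ]`-modules is multiplication by a nonzero constant, and its
existence forces `b = b'` and `S = S'`. In particular `M_b^S ≅ M_{b'}^{S'}` iff
`b = b'` and `S = S'`. -/
theorem MbS_iso_classification (n : ℕ) (hn : 1 < n) (b b' : ℂ) (S S' : Finset (Fin n))
    (φ : MvPolynomial (Fin n) ℂ ≃ₗ[ℂ] MvPolynomial (Fin n) ℂ)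
    (hmul : ∀ f g : MvPolynomial (Fin n) ℂ, φ (f * g) = f * φ g)
    (hE : ∀ (i : Fin n) (f), φ (Eop n b S i f) = Eop n b' S' i (φ f))
    (hF : ∀ (j : Fin n) (f), φ (Fop n b S j f) = Fop n b' S' j (φ f))
    (hEij : ∀ (i j : Fin n), i ≠ j → ∀ f, φ (EijOp n b S i j f) = EijOp n b' S' i j (φ f)) :
    (∃ c : ℂ, c ≠ 0 ∧ ∀ f, φ f = c • f) ∧ b = b' ∧ S = S' :=
  MbS_iso_classification_general n hn b b' S S' φ hmul hE
end
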